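/- Suppose (in the setting of the chain-starting lemma) w_0 is a level-(i+1) vertex with 4d² + 5d ≤ w_0(j) ≤ (i+1)d, and w_0 = w'_0, w'_1, ..., w'_{2d+1} is a sequence of level-(i+1) vertices such that for each ℓ, the distinguished source vertex DSV(w'_ℓ, j) lies in the source set of w'_{ℓ+1} and w'_{ℓ+1} ≠ w'_ℓ. Then 2d² + 4d ≤ w'_{2d+1}(j) < w'_{2d}(j) ≤ (i-1)d, so w'_{2d}, w'_{2d+1} are distinct uncovered vertices. -/
import Mathlib


/-- The source set of a vertex `w`: vectors `u` with an edge from `u` to `w`. -/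
def SourceSet (d q : ℕ) (w : Fin q → ℕ) : Set (Fin q → ℕ) :=
  {u | ∃ s : Fin q → ℕ, ∑ i, s i = d ∧ u + s = w}

/-- A level-`n` vertex `w` is covered if some other level-`n` vertex `w'` has
`S(w) ⊆ S(w')`. -/
def Covered (d q n : ℕ) (w : Fin q → ℕ) : Prop :=
  ∃ w' : Fin q → ℕ, w' ≠ w ∧ ∑ i, w' i = n * d ∧ SourceSet d q w ⊆ SourceSet d q w'

/-- If `d ≤ ∑ v`, there is a vector `s ≤ v` with sum exactly `d`. -/
lemma exists_le_sum_eq (q : ℕ) : ∀ (d : ℕ) (v : Fin q → ℕ), d ≤ ∑ k, v k →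
    ∃ s : Fin q → ℕ, (∀ k, s k ≤ v k) ∧ ∑ k, s k = d := by
  intro d
  induction d with
  | zero => exact fun v _ => ⟨0, fun k => Nat.zero_le _, by simp⟩
  | succ n ih =>
    intro v hv
    have hpos : 0 < ∑ k, v k := lt_of_lt_of_le (Nat.succ_pos n) hv
    have hex : ∃ k, 0 < v k := by
      by_contra h
      push_neg at h
      simp only [Nat.le_zero] at h
      simp [h] at hpos
    obtain ⟨k0, hk0⟩ := hex
    have hsv' : ∑ m, Function.update v k0 (v k0 - 1) m = (∑ m, v m) - 1 := by
      rw [Finset.sum_update_of_mem (Finset.mem_univ k0), Finset.sdiff_singleton_eq_erase]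
      have h1 : ∑ m ∈ Finset.univ.erase k0, v m + v k0 = ∑ m, v m :=
        Finset.sum_erase_add _ _ (Finset.mem_univ k0)
      omega
    have hn : n ≤ ∑ m, Function.update v k0 (v k0 - 1) m := by omega
    obtain ⟨s', hs'le, hs'sum⟩ := ih _ hn
    refine ⟨Function.update s' k0 (s' k0 + 1), ?_, ?_⟩
    · intro k
      by_cases hk : k = k0
      · subst hk
        have := hs'le k
        simp only [Function.update_self] at this ⊢
        omega
      · have := hs'le k
        simp only [Function.update_of_ne hk] at this ⊢
        exact this
    · rw [Finset.sum_update_of_mem (Finset.mem_univ k0), Finset.sdiff_singleton_eq_erase]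
      have h1 : ∑ m ∈ Finset.univ.erase k0, s' m + s' k0 = ∑ m, s' m :=
        Finset.sum_erase_add _ _ (Finset.mem_univ k0)
      omega

/-- A level-`n` vertex all of whose coordinates are at most `(n-1)d` is uncovered. -/
lemma not_covered_of_small (d q n : ℕ) (w : Fin q → ℕ)
    (hw : ∑ k, w k = n * d) (hcoord : ∀ k, w k + d ≤ n * d) :
    ¬ Covered d q n w := by
  rintro ⟨w', hne, hw', hsub⟩
  -- find a coordinate where w exceeds w'
  have hex : ∃ k, w' k < w k := by
    by_contra h
    push_neg at h
    apply hne
    funext k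
    have heq : ∑ k, w k = ∑ k, w' k := by rw [hw, hw']
    have := (Finset.sum_eq_sum_iff_of_le (fun k _ => h k)).mp heq
    exact (this k (Finset.mem_univ k)).symm
  obtain ⟨k, hk⟩ := hex
  -- a source of w keeping coordinate k intact
  have hsumv : d ≤ ∑ m, Function.update w k 0 m := by
    rw [Finset.sum_update_of_mem (Finset.mem_univ k), Finset.sdiff_singleton_eq_erase]
    have h1 : ∑ m ∈ Finset.univ.erase k, w m + w k = ∑ m, w m :=
      Finset.sum_erase_add _ _ (Finset.mem_univ k)
    have h2 := hcoord k
    omega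
  obtain ⟨s, hsle, hssum⟩ := exists_le_sum_eq q d _ hsumv
  have hsk : s k = 0 := by
    have := hsle k
    simpa using this
  have hslew : ∀ m, s m ≤ w m := by
    intro m
    have := hsle m
    by_cases hm : m = k
    · subst hm; omega
    · simpa [Function.update_of_ne hm] using this
  have hmem : (fun m => w m - s m) ∈ SourceSet d q w := by
    refine ⟨s, hssum, funext fun m => ?_⟩
    have := hslew m
    show (w m - s m) + s m = w m
    omega
  obtain ⟨t, htsum, hteq⟩ := hsub hmem
  have hk' := congrFun hteq k
  -- (w k - s k) + t k = w' k, with s k = 0 and w' k < w k : contradiction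
  have : w k - s k + t k = w' k := hk'
  omega

/-- Chain-starting estimates: if `w 0, w 1, …, w (2d+1)` are level-`(i+1)` vertices
with `4d² + 5d ≤ w 0 j ≤ (i+1)d`, each consecutive pair is distinct, and the
distinguished source vertex `DSV(w ℓ, j) = w ℓ - d·e_j` lies in the source set of
`w (ℓ+1)`, then `2d² + 4d ≤ w (2d+1) j < w (2d) j ≤ (i-1)d`, so `w (2d)` and
`w (2d+1)` are distinct uncovered vertices. -/
theorem chain_starting_estimates (d q i : ℕ) (hd : 0 < d) (hq : 2 ≤ q)
    (hi : 4 * d * q + 6 * q < i)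
    (j : Fin q) (w : ℕ → Fin q → ℕ)
    (hsum : ∀ l ≤ 2 * d + 1, ∑ k, w l k = (i + 1) * d)
    (h0lo : 4 * d ^ 2 + 5 * d ≤ w 0 j) (h0hi : w 0 j ≤ (i + 1) * d)
    (hne : ∀ l < 2 * d + 1, w (l + 1) ≠ w l)
    (hdsv : ∀ l < 2 * d + 1,
      (fun k => if k = j then w l k - d else w l k) ∈ SourceSet d q (w (l + 1))) :
    2 * d ^ 2 + 4 * d ≤ w (2 * d + 1) j ∧
      w (2 * d + 1) j < w (2 * d) j ∧
      w (2 * d) j ≤ (i - 1) * d ∧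
      w (2 * d) ≠ w (2 * d + 1) ∧
      ¬ Covered d q (i + 1) (w (2 * d)) ∧ ¬ Covered d q (i + 1) (w (2 * d + 1)) := by
  -- Per-step facts
  have step_lb : ∀ l < 2 * d + 1, w l j ≤ w (l + 1) j + d := by
    intro l hl
    obtain ⟨s, hs, heq⟩ := hdsv l hl
    have hj := congrFun heq j
    simp only [Pi.add_apply, if_pos rfl, if_true] at hj
    omega
  have step_lt : ∀ l < 2 * d + 1, d ≤ w l j → w (l + 1) j < w l j := by
    intro l hl hdwlj
    obtain ⟨s, hs, heq⟩ := hdsv l hl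
    have hj := congrFun heq j
    simp only [Pi.add_apply, if_pos rfl, if_true] at hj
    have hsjle : s j ≤ d := hs ▸ Finset.single_le_sum (fun k _ => Nat.zero_le (s k)) (Finset.mem_univ j)
    rcases lt_or_eq_of_le hsjle with hlt | heqd
    · omega
    · -- if s j = d then all other coordinates of s are 0 and w (l+1) = w l
      exfalso
      apply hne l hl
      funext k
      have hk := congrFun heq k
      simp only [Pi.add_apply] at hk
      by_cases hkj : k = j
      · subst hkj
        rw [if_pos rfl] at hk
        omega
      · rw [if_neg hkj] at hk
        have hsk : s k = 0 := by
          have h1 : ∑ m ∈ Finset.univ.erase j, s m + s j = ∑ m, s m :=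
            Finset.sum_erase_add _ _ (Finset.mem_univ j)
          have h2 : s k ≤ ∑ m ∈ Finset.univ.erase j, s m :=
            Finset.single_le_sum (fun m _ => Nat.zero_le (s m))
              (Finset.mem_erase.mpr ⟨hkj, Finset.mem_univ k⟩)
          omega
        omega
  -- Lower bound by induction : w 0 j ≤ w l j + l * d
  have H : ∀ l, l ≤ 2 * d + 1 → w 0 j ≤ w l j + l * d := by
    intro l
    induction l with
    | zero => simp
    | succ n ih =>
      intro h
      have h1 := ih (by omega)
      have h2 := step_lb n (by omega)
      have h3 : (n + 1) * d = n * d + d := Nat.succ_mul n d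
      linarith
  have lows : ∀ l ≤ 2 * d + 1, 2 * d ^ 2 + 4 * d ≤ w l j := by
    intro l hl
    have h1 := H l hl
    have h2 : l * d ≤ (2 * d + 1) * d := Nat.mul_le_mul_right d hl
    have h3 : (2 * d + 1) * d = 2 * d ^ 2 + d := by ring
    linarith
  have hdlow : ∀ l ≤ 2 * d + 1, d ≤ w l j := by
    intro l hl
    have := lows l hl
    nlinarith
  -- strict decrease chain : w l j + l ≤ w 0 j
  have G : ∀ l, l ≤ 2 * d + 1 → w l j + l ≤ w 0 j := by
    intro l
    induction l with
    | zero => simp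
    | succ n ih =>
      intro h
      have h1 := ih (by omega)
      have h2 := step_lt n (by omega) (hdlow n (by omega))
      omega
  have hG2d := G (2 * d) (by omega)
  have hlt : w (2 * d + 1) j < w (2 * d) j :=
    step_lt (2 * d) (by omega) (hdlow (2 * d) (by omega))
  have hi1 : 1 ≤ i := by nlinarith
  have hup : w (2 * d) j ≤ (i - 1) * d := by
    have e1 : (i - 1) * d + 2 * d = (i + 1) * d := by
      have : (i - 1) + 2 = i + 1 := by omega
      calc (i - 1) * d + 2 * d = ((i - 1) + 2) * d := by ring
        _ = (i + 1) * d := by rw [this]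
    have : w (2 * d) j + 2 * d ≤ w 0 j := hG2d
    linarith
  have hdle : d ≤ (i - 1) * d := Nat.le_mul_of_pos_left d (by omega)
  -- coordinate bounds for uncoveredness
  have coordbound : ∀ l ≤ 2 * d + 1, w l j ≤ (i - 1) * d →
      ∀ k, w l k + d ≤ (i + 1) * d := by
    intro l hl hlj k
    by_cases hkj : k = j
    · subst hkj
      have e1 : (i - 1) * d + 2 * d = (i + 1) * d := by
        have h2 : (i - 1) + 2 = i + 1 := by omega
        calc (i - 1) * d + 2 * d = ((i - 1) + 2) * d := by ring
          _ = (i + 1) * d := by rw [h2]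
      linarith
    · have hpair : w l k + w l j ≤ (i + 1) * d := by
        have hsub : ({k, j} : Finset (Fin q)) ⊆ Finset.univ := Finset.subset_univ _
        have h1 : ∑ m ∈ ({k, j} : Finset (Fin q)), w l m ≤ ∑ m, w l m :=
          Finset.sum_le_sum_of_subset hsub
        rw [Finset.sum_pair hkj, hsum l hl] at h1
        exact h1
      have hdj := hdlow l hl
      linarith
  refine ⟨lows (2 * d + 1) le_rfl, hlt, hup, (hne (2 * d) (by omega)).symm, ?_, ?_⟩
  · exact not_covered_of_small d q (i + 1) (w (2 * d)) (hsum _ (by omega))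
      (coordbound (2 * d) (by omega) hup)
  · exact not_covered_of_small d q (i + 1) (w (2 * d + 1)) (hsum _ (by omega))
      (coordbound (2 * d + 1) le_rfl (by omega))
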